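/- arXiv:2106.12379 — 5 statements merged into one kernel-verified Lean document; each statement's English description precedes it below -/
import Mathlib

section
/- Let θ* ∈ ℝ^N be a vector with at most k* nonzero entries, and let θ ∈ ℝ^N be a vector with at most n nonzero entries, where k* ≤ k ≤ n. Let T_k(θ) denote the vector obtained from θ by keeping its k largest entries in absolute value and setting the rest to zero. Then ‖T_k(θ) − θ‖² / (n − k) ≤ ‖θ* − θ‖² / (n − k*). -/
open scoped BigOperators RealInnerProductSpace

noncomputable section

/-- The set of nonzero coordinates of a vector. -/
def supp {N : ℕ} (x : EuclideanSpace ℝ (Fin N)) : Finset (Fin N) :=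
  Finset.univ.filter (fun i => x i ≠ 0)

/-- Restriction of a vector to a coordinate set `S` (zero outside `S`). -/
def restrict {N : ℕ} (x : EuclideanSpace ℝ (Fin N)) (S : Finset (Fin N)) :
    EuclideanSpace ℝ (Fin N) :=
  WithLp.toLp 2 (fun i => if i ∈ S then x i else 0)

/-- `y` is a result of the top-`k` hard-thresholding operator applied to `x`:
there is a set `S` of `k` coordinates of largest absolute value such that
`y` agrees with `x` on `S` and vanishes outside `S`. -/
def IsTopK {N : ℕ} (k : ℕ) (x y : EuclideanSpace ℝ (Fin N)) : Prop :=
  ∃ S : Finset (Fin N), S.card = k ∧ y = restrict x S ∧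
    ∀ i ∈ S, ∀ j ∉ S, |x j| ≤ |x i|

/-- The max-norm (ℓ∞ norm) of a vector. -/
def supNorm {N : ℕ} (x : EuclideanSpace ℝ (Fin N)) : ℝ :=
  ‖(WithLp.equiv 2 (Fin N → ℝ)) x‖

lemma norm_sq_eq {N : ℕ} (x : EuclideanSpace ℝ (Fin N)) : ‖x‖^2 = ∑ i, (x i)^2 := by
  rw [EuclideanSpace.norm_eq, Real.sq_sqrt (by positivity)]
  simp [sq_abs]

/-- Sparse projection lemma. -/
theorem stmt_0 {N n k kstar : ℕ} (θ θstar Tθ : EuclideanSpace ℝ (Fin N))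
    (hstar : (supp θstar).card ≤ kstar) (hθ : (supp θ).card ≤ n)
    (hk1 : kstar ≤ k) (hk2 : k ≤ n)
    (hT : IsTopK k θ Tθ) :
    ‖Tθ - θ‖ ^ 2 / ((n : ℝ) - k) ≤ ‖θstar - θ‖ ^ 2 / ((n : ℝ) - kstar) := by
  obtain ⟨S, hScard, hres, hmax⟩ := hT
  set B := supp θstar with hB
  -- numerator computations
  have hnormL : ‖Tθ - θ‖ ^ 2 = ∑ j ∈ Sᶜ, (θ j) ^ 2 := by
    rw [norm_sq_eq]
    rw [← Finset.sum_add_sum_compl S]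
    have h1 : ∀ j ∈ S, ((Tθ - θ) j)^2 = 0 := by
      intro j hj
      have : (Tθ - θ) j = Tθ j - θ j := by simp
      rw [this, hres]
      simp [restrict, hj]
    have h2 : ∀ j ∈ Sᶜ, ((Tθ - θ) j)^2 = (θ j)^2 := by
      intro j hj
      have hj' : j ∉ S := by simpa using hj
      have : (Tθ - θ) j = Tθ j - θ j := by simp
      rw [this, hres]
      simp [restrict, hj']
    rw [Finset.sum_congr rfl h1, Finset.sum_congr rfl h2]
    simp
  have hnormR : ∑ j ∈ Bᶜ, (θ j) ^ 2 ≤ ‖θstar - θ‖ ^ 2 := by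
    rw [norm_sq_eq]
    rw [← Finset.sum_add_sum_compl B (fun i => ((θstar - θ) i)^2)]
    have h2 : ∀ j ∈ Bᶜ, ((θstar - θ) j)^2 = (θ j)^2 := by
      intro j hj
      have hj' : j ∉ B := by simpa using hj
      have h0 : θstar j = 0 := by
        by_contra h
        exact hj' (by simp [hB, supp, h])
      have : (θstar - θ) j = θstar j - θ j := by simp
      rw [this, h0]
      ring
    rw [Finset.sum_congr rfl h2]
    have : (0:ℝ) ≤ ∑ j ∈ B, ((θstar - θ) j)^2 := by positivity
    linarith
  -- trivial case k = n
  rcases eq_or_lt_of_le hk2 with hkn | hkn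
  · subst hkn
    simp only [sub_self, div_zero]
    apply div_nonneg (by positivity)
    have : (kstar : ℝ) ≤ k := by exact_mod_cast hk1
    linarith
  have hnk : (0:ℝ) < (n:ℝ) - k := by
    have : (k:ℝ) < n := by exact_mod_cast hkn
    linarith
  have hnks : (0:ℝ) < (n:ℝ) - kstar := by
    have : (kstar:ℝ) ≤ k := by exact_mod_cast hk1
    linarith
  rw [div_le_div_iff₀ hnk hnks, hnormL]
  refine le_trans ?_ (mul_le_mul_of_nonneg_right hnormR hnk.le)
  -- main combinatorial inequality
  by_cases hz : ∀ j ∈ Sᶜ, θ j = 0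
  · have : ∑ j ∈ Sᶜ, (θ j)^2 = 0 := Finset.sum_eq_zero fun j hj => by rw [hz j hj]; ring
    rw [this, zero_mul]
    have : (0:ℝ) ≤ ∑ j ∈ Bᶜ, (θ j)^2 := by positivity
    positivity
  push_neg at hz
  obtain ⟨j₀, hj₀c, hj₀⟩ := hz
  have hj₀S : j₀ ∉ S := by simpa using hj₀c
  have hSsupp : S ⊆ supp θ := by
    intro i hi
    have := hmax i hi j₀ hj₀S
    have : θ i ≠ 0 := by
      intro h0
      rw [h0] at this
      simp at this
      exact hj₀ this
    simp [supp, this]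
  have hkstarR : (kstar:ℝ) ≤ k := by exact_mod_cast hk1
  -- sum decompositions
  have hdecL : ∑ j ∈ Sᶜ, (θ j)^2 = (∑ j ∈ (S ∪ B)ᶜ, (θ j)^2) + ∑ j ∈ B \ S, (θ j)^2 := by
    rw [← Finset.sum_union (by
      rw [Finset.disjoint_left]
      intro a ha hb
      simp at ha
      exact ha.2 (Finset.mem_sdiff.mp hb).1)]
    congr 1
    ext a
    simp [Finset.mem_sdiff]
    tauto
  have hdecR : ∑ j ∈ Bᶜ, (θ j)^2 = (∑ j ∈ (S ∪ B)ᶜ, (θ j)^2) + ∑ j ∈ S \ B, (θ j)^2 := by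
    rw [← Finset.sum_union (by
      rw [Finset.disjoint_left]
      intro a ha hb
      simp at ha
      exact ha.1 (Finset.mem_sdiff.mp hb).1)]
    congr 1
    ext a
    simp [Finset.mem_sdiff]
    tauto
  by_cases hD : (S \ B).Nonempty
  · obtain ⟨i₀, hi₀D, hmin⟩ := Finset.exists_min_image (S \ B) (fun i => (θ i)^2) hD
    set μ := (θ i₀)^2 with hμ
    have hμ0 : 0 ≤ μ := sq_nonneg _
    have hi₀S : i₀ ∈ S := (Finset.mem_sdiff.mp hi₀D).1
    have hout : ∀ j ∉ S, (θ j)^2 ≤ μ := by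
      intro j hj
      have h := hmax i₀ hi₀S j hj
      calc (θ j)^2 = |θ j|^2 := (sq_abs _).symm
        _ ≤ |θ i₀|^2 := by exact pow_le_pow_left₀ (abs_nonneg _) h 2
        _ = μ := sq_abs _
    -- L ≤ (n-k) μ
    have hLbound : ∑ j ∈ Sᶜ, (θ j)^2 ≤ ((n:ℝ) - k) * μ := by
      have hsub : ∑ j ∈ Sᶜ, (θ j)^2 = ∑ j ∈ supp θ \ S, (θ j)^2 := by
        rw [eq_comm]
        apply Finset.sum_subset
        · intro a ha
          simp [(Finset.mem_sdiff.mp ha).2]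
        · intro a ha ha'
          have : θ a = 0 := by
            by_contra h
            exact ha' (Finset.mem_sdiff.mpr ⟨by simp [supp, h], by simpa using ha⟩)
          rw [this]; ring
      rw [hsub]
      calc ∑ j ∈ supp θ \ S, (θ j)^2 ≤ (supp θ \ S).card • μ :=
            Finset.sum_le_card_nsmul _ _ _ (fun j hj => hout j (Finset.mem_sdiff.mp hj).2)
        _ = ((supp θ \ S).card : ℝ) * μ := by rw [nsmul_eq_mul]
        _ ≤ ((n:ℝ) - k) * μ := by
            apply mul_le_mul_of_nonneg_right _ hμ0
            rw [Finset.card_sdiff_of_subset hSsupp, hScard]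
            have h1 : k ≤ (supp θ).card := hScard ▸ Finset.card_le_card hSsupp
            rw [Nat.cast_sub h1]
            have : ((supp θ).card : ℝ) ≤ n := by exact_mod_cast hθ
            linarith
    -- Y ≤ (kstar - c) μ
    have hcBS : (B \ S).card + (B ∩ S).card = B.card := by
      rw [Finset.card_sdiff_add_card_inter]
    have hcSB : (S \ B).card + (S ∩ B).card = S.card := by
      rw [Finset.card_sdiff_add_card_inter]
    have hcomm : (B ∩ S).card = (S ∩ B).card := by rw [Finset.inter_comm]
    have hYbound : ∑ j ∈ B \ S, (θ j)^2 ≤ ((kstar:ℝ) - (S ∩ B).card) * μ := by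
      calc ∑ j ∈ B \ S, (θ j)^2 ≤ (B \ S).card • μ :=
            Finset.sum_le_card_nsmul _ _ _ (fun j hj => hout j (Finset.mem_sdiff.mp hj).2)
        _ = ((B \ S).card : ℝ) * μ := by rw [nsmul_eq_mul]
        _ ≤ ((kstar:ℝ) - (S ∩ B).card) * μ := by
            apply mul_le_mul_of_nonneg_right _ hμ0
            have : ((B \ S).card : ℝ) + (S ∩ B).card = B.card := by
              rw [← hcomm]; exact_mod_cast hcBS
            have hBk : ((B.card : ℝ)) ≤ kstar := by exact_mod_cast hstar
            linarith
    -- Z ≥ (k - c) μ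
    have hZbound : ((k:ℝ) - (S ∩ B).card) * μ ≤ ∑ i ∈ S \ B, (θ i)^2 := by
      have h1 : (S \ B).card • μ ≤ ∑ i ∈ S \ B, (θ i)^2 :=
        Finset.card_nsmul_le_sum _ _ _ (fun i hi => hmin i hi)
      have h2 : (((S \ B).card : ℝ)) = (k:ℝ) - (S ∩ B).card := by
        have : ((S \ B).card : ℝ) + (S ∩ B).card = k := by
          rw [← hScard]; exact_mod_cast hcSB
        linarith
      calc ((k:ℝ) - (S ∩ B).card) * μ = ((S \ B).card : ℝ) * μ := by rw [h2]
        _ = (S \ B).card • μ := by rw [nsmul_eq_mul]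
        _ ≤ _ := h1
    have hc1 : ((S ∩ B).card : ℝ) ≤ kstar := by
      have : (S ∩ B).card ≤ B.card := Finset.card_le_card Finset.inter_subset_right
      have := le_trans this hstar
      exact_mod_cast this
    have hX0 : (0:ℝ) ≤ ∑ j ∈ (S ∪ B)ᶜ, (θ j)^2 := by positivity
    have hY0 : (0:ℝ) ≤ ∑ j ∈ B \ S, (θ j)^2 := by positivity
    rw [hdecL, hdecR]
    nlinarith [mul_le_mul_of_nonneg_right hLbound (sub_nonneg.mpr hkstarR),
      mul_le_mul_of_nonneg_left hYbound hnk.le,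
      mul_le_mul_of_nonneg_left hZbound hnk.le, mul_nonneg hnk.le hμ0]
  · -- S ⊆ B, forcing S = B and k = kstar
    rw [Finset.not_nonempty_iff_eq_empty, Finset.sdiff_eq_empty_iff_subset] at hD
    have hkB : k ≤ B.card := hScard ▸ Finset.card_le_card hD
    have hkk : k = kstar := le_antisymm (le_trans hkB hstar) hk1
    have hSB : S = B := Finset.eq_of_subset_of_card_le hD (by omega)
    rw [hSB, hkk]
end
end

section
/- Let θ ∈ ℝ^N be n-sparse and let T_k denote the hard-thresholding (top-k) operator. Then the function k ↦ ‖T_k(θ) − θ‖² / (n − k) is non-increasing on {0, 1, ..., n−1}. -/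
open scoped BigOperators RealInnerProductSpace

noncomputable section

lemma norm_restrict_sub_sq {N : ℕ} (θ : EuclideanSpace ℝ (Fin N)) (S : Finset (Fin N)) :
    ‖restrict θ S - θ‖ ^ 2 = ∑ i ∈ Sᶜ, θ i ^ 2 := by
  have h : ‖restrict θ S - θ‖ = Real.sqrt (∑ i, (restrict θ S - θ) i ^ 2) := by
    rw [EuclideanSpace.norm_eq]
    congr 1
    exact Finset.sum_congr rfl fun i _ => by rw [Real.norm_eq_abs, sq_abs]
  rw [h, Real.sq_sqrt (Finset.sum_nonneg fun i _ => sq_nonneg _)]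
  rw [← Finset.sum_add_sum_compl S]
  have h1 : ∑ i ∈ S, (restrict θ S - θ) i ^ 2 = 0 := by
    apply Finset.sum_eq_zero
    intro i hi
    simp [restrict, hi]
  have h2 : ∀ i ∈ Sᶜ, (restrict θ S - θ) i ^ 2 = θ i ^ 2 := by
    intro i hi
    rw [Finset.mem_compl] at hi
    simp [restrict, hi]
  rw [h1, Finset.sum_congr rfl h2, zero_add]

set_option maxHeartbeats 1000000 in
/-- For an n-sparse θ, the map k ↦ ‖T_k(θ) − θ‖²/(n−k) is non-increasing on
{0, 1, …, n−1}. -/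
theorem stmt_1 {N n : ℕ} (θ : EuclideanSpace ℝ (Fin N)) (hθ : (supp θ).card ≤ n)
    (k k' : ℕ) (hkk' : k ≤ k') (hk' : k' ≤ n - 1)
    (Tk Tk' : EuclideanSpace ℝ (Fin N))
    (hTk : IsTopK k θ Tk) (hTk' : IsTopK k' θ Tk') :
    ‖Tk' - θ‖ ^ 2 / ((n : ℝ) - k') ≤ ‖Tk - θ‖ ^ 2 / ((n : ℝ) - k) := by
  obtain ⟨S, hScard, hTkEq, hSmax⟩ := hTk
  obtain ⟨S', hS'card, hTk'Eq, hS'max⟩ := hTk'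
  subst hTkEq hTk'Eq
  rw [norm_restrict_sub_sq, norm_restrict_sub_sq]
  set R : ℝ := ∑ i ∈ Sᶜ, θ i ^ 2 with hR
  set R' : ℝ := ∑ i ∈ S'ᶜ, θ i ^ 2 with hR'
  have hRnn : 0 ≤ R := Finset.sum_nonneg fun i _ => sq_nonneg _
  have hR'nn : 0 ≤ R' := Finset.sum_nonneg fun i _ => sq_nonneg _
  rcases Nat.eq_zero_or_pos n with hn | hn
  · subst hn
    have hk'0 : k' = 0 := Nat.le_zero.mp hk'
    have hk0 : k = 0 := Nat.le_antisymm (hk'0 ▸ hkk') (Nat.zero_le _)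
    subst hk'0; subst hk0
    simp
  rcases Nat.eq_zero_or_pos k' with hk'0 | hk'pos
  · have hk0 : k = 0 := Nat.le_antisymm (hk'0 ▸ hkk') (Nat.zero_le _)
    subst hk'0; subst hk0
    have hS : S = ∅ := Finset.card_eq_zero.mp hScard
    have hS' : S' = ∅ := Finset.card_eq_zero.mp hS'card
    rw [hR, hR', hS, hS']
  -- main case
  have hk'ltn : k' < n := Nat.lt_of_le_of_lt hk' (Nat.sub_lt hn Nat.one_pos)
  have hkltn : k < n := Nat.lt_of_le_of_lt hkk' hk'ltn
  have hnk : (0 : ℝ) < (n : ℝ) - k := by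
    have := (Nat.cast_lt (α := ℝ)).mpr hkltn; linarith
  have hnk' : (0 : ℝ) < (n : ℝ) - k' := by
    have := (Nat.cast_lt (α := ℝ)).mpr hk'ltn; linarith
  rw [div_le_div_iff₀ hnk' hnk]
  -- get the minimal element of S'
  have hS'ne : S'.Nonempty := Finset.card_pos.mp (hS'card ▸ hk'pos)
  obtain ⟨i₀, hi₀S', hi₀min⟩ := S'.exists_min_image (fun i => θ i ^ 2) hS'ne
  set m : ℝ := θ i₀ ^ 2 with hm
  have hmnn : 0 ≤ m := sq_nonneg _
  have hout : ∀ j ∉ S', θ j ^ 2 ≤ m := by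
    intro j hj
    have h := hS'max i₀ hi₀S' j hj
    calc θ j ^ 2 = |θ j| ^ 2 := (sq_abs _).symm
      _ ≤ |θ i₀| ^ 2 := pow_le_pow_left₀ (abs_nonneg _) h 2
      _ = m := sq_abs _
  have hkk'R : (k : ℝ) ≤ (k' : ℝ) := Nat.cast_le.mpr hkk'
  by_cases hz : θ i₀ = 0
  · -- then R' = 0
    have hR'0 : R' = 0 := by
      apply Finset.sum_eq_zero
      intro j hj
      have h1 := hout j (Finset.mem_compl.mp hj)
      rw [hm, hz] at h1
      simp only [ne_eq, zero_pow, OfNat.ofNat_ne_zero, not_false_eq_true] at h1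
      nlinarith [sq_nonneg (θ j)]
    rw [hR'0]
    nlinarith
  -- θ i₀ ≠ 0, so S' ⊆ supp θ
  have hmpos : 0 < m := by positivity
  have hS'supp : S' ⊆ supp θ := by
    intro i hi
    simp only [supp, Finset.mem_filter, Finset.mem_univ, true_and]
    intro h0
    have h1 := hi₀min i hi
    rw [h0] at h1
    simp only [ne_eq, zero_pow, OfNat.ofNat_ne_zero, not_false_eq_true] at h1
    nlinarith
  -- Claim 2 : R' ≤ (n - k') * m
  have hcard2 : ((supp θ \ S').card : ℝ) ≤ (n : ℝ) - k' := by
    have h2 : k' ≤ (supp θ).card := hS'card ▸ Finset.card_le_card hS'supp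
    rw [Finset.card_sdiff_of_subset hS'supp, hS'card, Nat.cast_sub h2]
    have : ((supp θ).card : ℝ) ≤ n := Nat.cast_le.mpr hθ
    linarith
  have hclaim2 : R' ≤ ((n : ℝ) - k') * m := by
    have hsubset : supp θ \ S' ⊆ S'ᶜ := fun i hi =>
      Finset.mem_compl.mpr (Finset.mem_sdiff.mp hi).2
    have hsub : R' = ∑ i ∈ supp θ \ S', θ i ^ 2 := by
      rw [hR']
      refine (Finset.sum_subset hsubset ?_).symm
      intro i _ hni
      by_cases hsuppi : i ∈ supp θ
      · exfalso
        exact hni (Finset.mem_sdiff.mpr ⟨hsuppi, fun h => (Finset.mem_compl.mp ‹i ∈ S'ᶜ› h)⟩)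
      · have : θ i = 0 := by
          by_contra h0
          exact hsuppi (Finset.mem_filter.mpr ⟨Finset.mem_univ _, h0⟩)
        simp [this]
    have hbound : ∑ i ∈ supp θ \ S', θ i ^ 2 ≤ ((supp θ \ S').card : ℝ) * m := by
      have := Finset.sum_le_card_nsmul (supp θ \ S') (fun i => θ i ^ 2) m
        (fun i hi => hout i (Finset.mem_sdiff.mp hi).2)
      simpa [nsmul_eq_mul] using this
    rw [hsub]
    exact hbound.trans (mul_le_mul_of_nonneg_right hcard2 hmnn)
  -- Claim 1 : R' + (k' - k) * m ≤ R
  have hsetR : Sᶜ ∩ S' = S' \ S := by ext i; simp [and_comm]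
  have hsetR' : S'ᶜ ∩ S = S \ S' := by ext i; simp [and_comm]
  have hsetc : Sᶜ \ S' = S'ᶜ \ S := by ext i; simp [and_comm]
  have hsplitR : R = ∑ i ∈ S' \ S, θ i ^ 2 + ∑ i ∈ S'ᶜ \ S, θ i ^ 2 := by
    rw [hR, ← Finset.sum_inter_add_sum_sdiff Sᶜ S' (fun i => θ i ^ 2), hsetR, hsetc]
  have hsplitR' : R' = ∑ i ∈ S \ S', θ i ^ 2 + ∑ i ∈ S'ᶜ \ S, θ i ^ 2 := by
    rw [hR', ← Finset.sum_inter_add_sum_sdiff S'ᶜ S (fun i => θ i ^ 2), hsetR']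
  have hlow : ((S' \ S).card : ℝ) * m ≤ ∑ i ∈ S' \ S, θ i ^ 2 := by
    have := Finset.card_nsmul_le_sum (S' \ S) (fun i => θ i ^ 2) m
      (fun i hi => hi₀min i (Finset.mem_sdiff.mp hi).1)
    simpa [nsmul_eq_mul] using this
  have hup : ∑ i ∈ S \ S', θ i ^ 2 ≤ ((S \ S').card : ℝ) * m := by
    have := Finset.sum_le_card_nsmul (S \ S') (fun i => θ i ^ 2) m
      (fun i hi => hout i (Finset.mem_sdiff.mp hi).2)
    simpa [nsmul_eq_mul] using this
  have hc1 : (S' \ S).card + (S' ∩ S).card = k' := by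
    rw [Finset.card_sdiff_add_card_inter, hS'card]
  have hc2 : (S \ S').card + (S ∩ S').card = k := by
    rw [Finset.card_sdiff_add_card_inter, hScard]
  have hcc : (S' ∩ S).card = (S ∩ S').card := by rw [Finset.inter_comm]
  have hc1R : ((S' \ S).card : ℝ) = (k' : ℝ) - ((S ∩ S').card : ℝ) := by
    rw [← hcc]
    have := congrArg (Nat.cast (R := ℝ)) hc1
    push_cast at this
    linarith
  have hc2R : ((S \ S').card : ℝ) = (k : ℝ) - ((S ∩ S').card : ℝ) := by
    have := congrArg (Nat.cast (R := ℝ)) hc2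
    push_cast at this
    linarith
  have hclaim1 : R' + ((k' : ℝ) - k) * m ≤ R := by
    rw [hsplitR, hsplitR']
    nlinarith [hlow, hup]
  nlinarith [mul_le_mul_of_nonneg_right hclaim2 (by linarith : (0:ℝ) ≤ (k' : ℝ) - k),
    mul_le_mul_of_nonneg_left hclaim1 (le_of_lt hnk')]
end
end

section
/- Let f : ℝ^N → ℝ be differentiable with a global minimum value f* attained at some point, and suppose f satisfies the Polyak–Łojasiewicz inequality ‖∇f(θ)‖² ≥ (α/2)(f(θ) − f*) for all θ, with α > 0. Then for every θ₀ there exists a global minimizer θ* of f such that f(θ₀) − f* ≥ (α/8)‖θ₀ − θ*‖². -/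
open scoped BigOperators RealInnerProductSpace

noncomputable section

open Filter in
theorem aux_key {N : ℕ} (α : ℝ) (hα : 0 < α)
    (f : EuclideanSpace ℝ (Fin N) → ℝ) (hf : Differentiable ℝ f) (fstar : ℝ)
    (hlb : ∀ θ, fstar ≤ f θ)
    (hPL : ∀ θ, ‖gradient f θ‖ ^ 2 ≥ α / 2 * (f θ - fstar))
    (θ0 : EuclideanSpace ℝ (Fin N)) (c : ℝ) (hc : 0 < c) (hc2 : c ^ 2 < α / 8) :
    ∃ x, f x = fstar ∧ c * ‖θ0 - x‖ ≤ Real.sqrt (f θ0 - fstar) := by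
  set g : EuclideanSpace ℝ (Fin N) → ℝ := fun θ => Real.sqrt (f θ - fstar) with hg
  have hgc : Continuous g := (Real.continuous_sqrt).comp ((hf.continuous).sub continuous_const)
  set φ : EuclideanSpace ℝ (Fin N) → ℝ := fun θ => g θ + c * ‖θ - θ0‖ with hφ
  have hφc : Continuous φ := hgc.add (continuous_const.mul ((continuous_id.sub continuous_const).norm))
  have hg0 : ∀ θ, 0 ≤ g θ := fun θ => Real.sqrt_nonneg _
  -- coercivity
  have hcoer : Tendsto φ (cocompact _) atTop := by
    have h2 : Tendsto (fun θ : EuclideanSpace ℝ (Fin N) => ‖θ‖ + -‖θ0‖) (cocompact _) atTop :=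
      tendsto_atTop_add_const_right _ _ (tendsto_norm_cocompact_atTop)
    have h3 : Tendsto (fun θ : EuclideanSpace ℝ (Fin N) => ‖θ - θ0‖) (cocompact _) atTop := by
      apply tendsto_atTop_mono (fun θ => ?_) h2
      have := norm_sub_norm_le θ θ0
      linarith
    exact tendsto_atTop_mono (fun θ => le_add_of_nonneg_left (hg0 θ))
      (Tendsto.const_mul_atTop hc h3)
  obtain ⟨x, hx⟩ := hφc.exists_forall_le hcoer
  have hxf : f x = fstar := by
    by_contra hne
    have hfx : fstar < f x := lt_of_le_of_ne (hlb x) (Ne.symm hne)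
    have hgx : 0 < g x := Real.sqrt_pos.mpr (by linarith)
    set v := gradient f x with hv
    have hvn : 0 < ‖v‖ := by
      have h1 := hPL x
      have h2 : 0 < ‖v‖ ^ 2 := lt_of_lt_of_le (by nlinarith [hα]) h1
      nlinarith [norm_nonneg v]
    have hline : HasDerivAt (fun t : ℝ => x - t • v) (-v) 0 := by
      have h1 : HasDerivAt (fun t : ℝ => t • v) v 0 := by
        simpa using (hasDerivAt_id (0:ℝ)).smul_const v
      simpa using (h1.const_sub x)
    have hgrad : HasGradientAt f v x := (hf x).hasGradientAt
    have hfd : HasFDerivAt f (InnerProductSpace.toDual ℝ _ v) ((fun t : ℝ => x - t • v) 0) := by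
      simpa using hgrad.hasFDerivAt
    have hcomp : HasDerivAt (fun t : ℝ => f (x - t • v)) (-‖v‖ ^ 2) 0 := by
      have h0 := hfd.comp_hasDerivAt 0 hline
      have heq : (InnerProductSpace.toDual ℝ (EuclideanSpace ℝ (Fin N)) v) (-v) = -‖v‖ ^ 2 := by
        rw [InnerProductSpace.toDual_apply_apply, inner_neg_right, real_inner_self_eq_norm_sq]
      rw [heq] at h0
      exact h0
    have hψ : HasDerivAt (fun t : ℝ => g (x - t • v)) (-‖v‖ ^ 2 / (2 * g x)) 0 := by
      have hsub : HasDerivAt (fun t : ℝ => f (x - t • v) - fstar) (-‖v‖ ^ 2) 0 :=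
        hcomp.sub_const fstar
      have hsq : HasDerivAt Real.sqrt (1 / (2 * Real.sqrt (f x - fstar)))
          ((fun t : ℝ => f (x - t • v) - fstar) 0) := by
        simpa using Real.hasDerivAt_sqrt (ne_of_gt (by linarith : (0:ℝ) < f x - fstar))
      have hc2 := hsq.comp (0:ℝ) hsub
      have heq : (Real.sqrt ∘ fun t : ℝ => f (x - t • v) - fstar) = fun t : ℝ => g (x - t • v) := by
        ext t; simp [hg, Function.comp]
      rw [heq] at hc2
      have hgxv : g x = Real.sqrt (f x - fstar) := by simp [hg]
      rw [show -‖v‖ ^ 2 / (2 * g x) = 1 / (2 * Real.sqrt (f x - fstar)) * -‖v‖ ^ 2 by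
        rw [hgxv]; ring]
      exact hc2
    have hslope : ∀ t : ℝ, 0 < t → -(c * ‖v‖) ≤ (g (x - t • v) - g x) / t := by
      intro t ht
      have h2 : ‖x - t • v - θ0‖ ≤ ‖x - θ0‖ + t * ‖v‖ := by
        calc ‖x - t • v - θ0‖ = ‖(x - θ0) + -(t • v)‖ := by congr 1; abel
          _ ≤ ‖x - θ0‖ + ‖-(t • v)‖ := norm_add_le _ _
          _ = ‖x - θ0‖ + t * ‖v‖ := by rw [norm_neg, norm_smul]; simp [abs_of_pos ht]
      have h3 : g x - c * (t * ‖v‖) ≤ g (x - t • v) := by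
        have h1 := hx (x - t • v)
        simp only [hφ] at h1
        nlinarith [h1, h2]
      rw [le_div_iff₀ ht]
      nlinarith
    have hlim : -(c * ‖v‖) ≤ -‖v‖ ^ 2 / (2 * g x) := by
      have htend : Tendsto (fun t : ℝ => (g (x - t • v) - g x) / t) (nhdsWithin 0 (Set.Ioi 0))
          (nhds (-‖v‖ ^ 2 / (2 * g x))) := by
        have h1 := (hasDerivAt_iff_tendsto_slope.mp hψ).mono_left
          (nhdsWithin_mono 0 (fun t ht => by simp at ht ⊢; exact ne_of_gt ht))
        apply h1.congr
        intro t
        simp [slope_def_field, div_eq_inv_mul]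
      refine ge_of_tendsto htend ?_
      filter_upwards [self_mem_nhdsWithin] with t ht
      exact hslope t ht
    have h4 : -(c * ‖v‖) * (2 * g x) ≤ -‖v‖ ^ 2 := by
      have := (le_div_iff₀ (by positivity : (0:ℝ) < 2 * g x)).1 hlim
      linarith
    have hvle : ‖v‖ ≤ 2 * c * g x := by nlinarith [hvn, hgx]
    have hg2 : g x ^ 2 = f x - fstar := Real.sq_sqrt (by linarith)
    have hpl := hPL x
    nlinarith [hvn, hgx, mul_le_mul hvle hvle (le_of_lt hvn) (by positivity : (0:ℝ) ≤ 2 * c * g x)]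
  refine ⟨x, hxf, ?_⟩
  have h1 := hx θ0
  simp only [hφ, hg, hxf, sub_self, Real.sqrt_zero, norm_zero, mul_zero, add_zero,
    zero_add] at h1
  calc c * ‖θ0 - x‖ = c * ‖x - θ0‖ := by rw [norm_sub_rev]
    _ ≤ _ := h1


set_option maxHeartbeats 1600000 in
/-- Polyak–Łojasiewicz implies quadratic growth with constant α/8. -/
theorem stmt_4 {N : ℕ} (α : ℝ) (hα : 0 < α)
    (f : EuclideanSpace ℝ (Fin N) → ℝ) (hf : Differentiable ℝ f) (fstar : ℝ)
    (hlb : ∀ θ, fstar ≤ f θ) (hatt : ∃ θ, f θ = fstar)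
    (hPL : ∀ θ, ‖gradient f θ‖ ^ 2 ≥ α / 2 * (f θ - fstar))
    (θ0 : EuclideanSpace ℝ (Fin N)) :
    ∃ θstar, f θstar = fstar ∧ f θ0 - fstar ≥ α / 8 * ‖θ0 - θstar‖ ^ 2 := by

  set c : ℝ := Real.sqrt (α / 8) with hcdef
  have hc : 0 < c := Real.sqrt_pos.mpr (by linarith)
  have hc2 : c ^ 2 = α / 8 := Real.sq_sqrt (by linarith)
  set h0 : ℝ := Real.sqrt (f θ0 - fstar) with hh0
  have hF : 0 ≤ f θ0 - fstar := by linarith [hlb θ0]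
  have hh02 : h0 ^ 2 = f θ0 - fstar := Real.sq_sqrt hF
  set K : Set (EuclideanSpace ℝ (Fin N)) := {x | f x = fstar ∧ c / 2 * ‖θ0 - x‖ ≤ h0} with hK
  have hKne : K.Nonempty := by
    obtain ⟨x, hx1, hx2⟩ := aux_key α hα f hf fstar hlb hPL θ0 (c / 2) (by positivity)
      (by nlinarith)
    exact ⟨x, hx1, hx2⟩
  have hKclosed : IsClosed K := by
    apply IsClosed.inter
    · exact isClosed_eq hf.continuous continuous_const
    · exact isClosed_le (continuous_const.mul ((continuous_const.sub continuous_id).norm))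
        continuous_const
  have hKbdd : Bornology.IsBounded K := by
    apply Bornology.IsBounded.subset (Metric.isBounded_closedBall (x := θ0) (r := 2 * h0 / c))
    rintro x ⟨-, hx2⟩
    simp only [Metric.mem_closedBall]
    rw [dist_comm, dist_eq_norm, norm_sub_rev, le_div_iff₀ hc, norm_sub_rev]
    nlinarith [hx2]
  have hKcpt : IsCompact K := Metric.isCompact_of_isClosed_isBounded hKclosed hKbdd
  have hcont : Continuous (fun x : EuclideanSpace ℝ (Fin N) => ‖θ0 - x‖) :=
    (continuous_const.sub continuous_id).norm
  obtain ⟨xs, hxsK, hxsmin⟩ := hKcpt.exists_isMinOn hKne hcont.continuousOn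
  refine ⟨xs, hxsK.1, ?_⟩
  set d : ℝ := ‖θ0 - xs‖ with hd
  rw [ge_iff_le]
  by_contra hcon
  push_neg at hcon
  have hd0 : 0 < d := by
    rcases eq_or_lt_of_le (norm_nonneg (θ0 - xs)) with h | h
    · rw [← hd] at h; rw [← h] at hcon; simp at hcon; linarith
    · exact h
  set s : ℝ := max (α / 32) ((f θ0 - fstar) / d ^ 2) with hs
  have hslt : s < α / 8 := by
    apply max_lt (by linarith)
    rw [div_lt_iff₀ (by positivity)]
    linarith
  set c' : ℝ := Real.sqrt ((s + α / 8) / 2) with hc'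
  have hspos : 0 < (s + α / 8) / 2 := by
    have : 0 < s + α / 8 := by
      have := le_max_left (α / 32) ((f θ0 - fstar) / d ^ 2)
      have h32 : (0:ℝ) < α / 32 := by linarith
      linarith [le_trans h32.le this]
    linarith
  have hc'pos : 0 < c' := Real.sqrt_pos.mpr hspos
  have hc'2 : c' ^ 2 = (s + α / 8) / 2 := Real.sq_sqrt hspos.le
  have hc'lt : c' ^ 2 < α / 8 := by rw [hc'2]; linarith
  have hc'gt : s < c' ^ 2 := by rw [hc'2]; linarith
  obtain ⟨x, hx1, hx2⟩ := aux_key α hα f hf fstar hlb hPL θ0 c' hc'pos hc'lt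
  have hxK : x ∈ K := by
    refine ⟨hx1, ?_⟩
    have hc2lt : (c / 2) ^ 2 < c' ^ 2 := by
      have h32 : (c / 2) ^ 2 = α / 32 := by rw [div_pow, hc2]; ring
      rw [h32]
      exact lt_of_le_of_lt (le_max_left _ _) hc'gt
    have hhalf : c / 2 < c' := by
      nlinarith [hc'pos, hc]
    nlinarith [norm_nonneg (θ0 - x), hx2]
  have hdle : d ≤ ‖θ0 - x‖ := hxsmin hxK
  have h1 : c' * d ≤ h0 := le_trans (by nlinarith) hx2
  have h2 : c' ^ 2 * d ^ 2 ≤ f θ0 - fstar := by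
    nlinarith [mul_le_mul h1 h1 (by positivity : (0:ℝ) ≤ c' * d) (Real.sqrt_nonneg (f θ0 - fstar)),
      hh02]
  have h3 : (f θ0 - fstar) / d ^ 2 < c' ^ 2 := lt_of_le_of_lt (le_max_right _ _) hc'gt
  rw [div_lt_iff₀ (by positivity)] at h3
  nlinarith
end
end

section
/- Let θ, g ∈ ℝ^N with supp(θ) = S, and let S' be the support of T_k(θ + g) where |S'| = |S| = k. Let S* be any subset with |S*| < |S|. Then ‖(θ + g)_{S∖S'}‖² − ‖g_{S∪S'}‖² ≤ ‖(θ + g)_{Z∖S'}‖² − ‖g_{S*}‖² for some set Z with |Z ∖ S'| ≤ 2|S*|. -/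
open scoped BigOperators RealInnerProductSpace

noncomputable section

lemma norm_restrict_sq {N : ℕ} (x : EuclideanSpace ℝ (Fin N)) (A : Finset (Fin N)) :
    ‖restrict x A‖ ^ 2 = ∑ i ∈ A, x i ^ 2 := by
  rw [EuclideanSpace.norm_eq, Real.sq_sqrt (by positivity)]
  have : ∀ i, ‖restrict x A i‖ ^ 2 = if i ∈ A then x i ^ 2 else 0 := by
    intro i
    simp only [restrict, Real.norm_eq_abs, sq_abs, PiLp.toLp_apply]
    split <;> simp
  simp_rw [this]
  rw [Finset.sum_ite_mem, Finset.univ_inter]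

lemma sum_sq_le_sum_sq {N : ℕ} (x : Fin N → ℝ) {A C : Finset (Fin N)}
    (hcard : A.card ≤ C.card)
    (hd : ∀ j ∈ A, ∀ i ∈ C, |x j| ≤ |x i|) :
    ∑ i ∈ A, x i ^ 2 ≤ ∑ i ∈ C, x i ^ 2 := by
  obtain ⟨C', hsub, hcard'⟩ := Finset.exists_subset_card_eq hcard
  have e : (A : Finset (Fin N)) ≃ (C' : Finset (Fin N)) :=
    Finset.equivOfCardEq hcard'.symm
  have h1 : ∑ i ∈ A, x i ^ 2 ≤ ∑ i ∈ C', x i ^ 2 := by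
    rw [← Finset.sum_coe_sort A (fun i => x i ^ 2),
        ← Finset.sum_coe_sort C' (fun i => x i ^ 2),
        ← e.sum_comp (fun i => x (i : Fin N) ^ 2)]
    apply Finset.sum_le_sum
    intro j _
    have h := hd j j.2 (e j) (hsub (e j).2)
    calc (x j : ℝ) ^ 2 = |x j| ^ 2 := (sq_abs _).symm
      _ ≤ |x (e j)| ^ 2 := by gcongr
      _ = x (e j) ^ 2 := sq_abs _
  exact h1.trans (Finset.sum_le_sum_of_subset_of_nonneg hsub (by intros; positivity))

/-- Truncation-and-optimization lemma: S' is the support of the top-k of θ+g. -/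
theorem stmt_6 {N k : ℕ} (θ g : EuclideanSpace ℝ (Fin N))
    (S S' Sstar : Finset (Fin N))
    (hS : supp θ = S) (hScard : S.card = k) (hS'card : S'.card = k)
    (htop : ∀ i ∈ S', ∀ j ∉ S', |(θ + g) j| ≤ |(θ + g) i|)
    (hSstar : Sstar.card < k) :
    ∃ Z : Finset (Fin N), (Z \ S').card ≤ 2 * Sstar.card ∧
      ‖restrict (θ + g) (S \ S')‖ ^ 2 - ‖restrict g (S ∪ S')‖ ^ 2 ≤
        ‖restrict (θ + g) (Z \ S')‖ ^ 2 - ‖restrict g Sstar‖ ^ 2 := by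
  classical
  set x : EuclideanSpace ℝ (Fin N) := θ + g with hx
  have hθ0 : ∀ i, i ∉ S → θ i = 0 := by
    intro i hi
    by_contra h
    exact hi (hS ▸ Finset.mem_filter.mpr ⟨Finset.mem_univ _, h⟩)
  have hxg : ∀ i, i ∉ S → x i = g i := by
    intro i hi
    have : x i = θ i + g i := rfl
    rw [this, hθ0 i hi, zero_add]
  have hcardsd : (S \ S').card = (S' \ S).card :=
    Finset.card_sdiff_comm (by rw [hScard, hS'card])
  have hm : (Sstar ∩ (S' \ S)).card ≤ (S \ S').card := by
    rw [hcardsd]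
    exact Finset.card_le_card Finset.inter_subset_right
  obtain ⟨B, hBsub, hBcard⟩ := Finset.exists_subset_card_eq hm
  refine ⟨(Sstar \ (S ∪ S')) ∪ B, ?_, ?_⟩
  · calc ((Sstar \ (S ∪ S') ∪ B) \ S').card
        ≤ (Sstar \ (S ∪ S') ∪ B).card := Finset.card_le_card (Finset.sdiff_subset)
      _ ≤ (Sstar \ (S ∪ S')).card + B.card := Finset.card_union_le _ _
      _ ≤ Sstar.card + Sstar.card := Nat.add_le_add
          (Finset.card_le_card Finset.sdiff_subset)
          (le_trans (le_of_eq hBcard) (Finset.card_le_card Finset.inter_subset_left))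
      _ = 2 * Sstar.card := (two_mul _).symm
  · have hZ : (Sstar \ (S ∪ S') ∪ B) \ S' = Sstar \ (S ∪ S') ∪ B := by
      rw [Finset.sdiff_eq_self_iff_disjoint]
      rw [Finset.disjoint_left]
      intro a ha haS'
      rcases Finset.mem_union.mp ha with h | h
      · exact (Finset.mem_sdiff.mp h).2 (Finset.mem_union_right _ haS')
      · exact (Finset.mem_sdiff.mp (hBsub h)).2 haS'
    rw [hZ, norm_restrict_sq, norm_restrict_sq, norm_restrict_sq, norm_restrict_sq]
    -- disjointness of the two pieces of Z
    have hdisj : Disjoint (Sstar \ (S ∪ S')) B := by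
      rw [Finset.disjoint_left]
      intro a ha haB
      exact (Finset.mem_sdiff.mp ha).2
        (Finset.mem_union_left _ (Finset.mem_sdiff.mp (hBsub haB)).1)
    have h1 : ∑ i ∈ Sstar \ (S ∪ S') ∪ B, x i ^ 2
        = ∑ i ∈ Sstar \ (S ∪ S'), g i ^ 2 + ∑ i ∈ B, x i ^ 2 := by
      rw [Finset.sum_union hdisj]
      congr 1
      apply Finset.sum_congr rfl
      intro i hi
      rw [hxg i (fun h => (Finset.mem_sdiff.mp hi).2 (Finset.mem_union_left _ h))]
    have h2 : ∑ i ∈ S \ S', x i ^ 2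
        = ∑ i ∈ (S \ S') \ B, x i ^ 2 + ∑ i ∈ B, x i ^ 2 :=
      (Finset.sum_sdiff hBsub).symm
    -- key comparison
    have hkey : ∑ i ∈ (S \ S') \ B, x i ^ 2 ≤ ∑ i ∈ (S' \ S) \ Sstar, x i ^ 2 := by
      apply sum_sq_le_sum_sq
      · have c1 : ((S \ S') \ B).card + B.card = (S \ S').card :=
          Finset.card_sdiff_add_card_eq_card hBsub
        have c2 : ((S' \ S) \ Sstar).card + ((S' \ S) ∩ Sstar).card = (S' \ S).card :=
          Finset.card_sdiff_add_card_inter _ _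
        have c3 : (S' \ S) ∩ Sstar = Sstar ∩ (S' \ S) := Finset.inter_comm _ _
        rw [c3, hBcard.symm] at c2
        omega
      · intro j hj i hi
        have hjS' : j ∉ S' := (Finset.mem_sdiff.mp (Finset.mem_sdiff.mp hj).1).2
        have hiS' : i ∈ S' := (Finset.mem_sdiff.mp (Finset.mem_sdiff.mp hi).1).1
        exact htop i hiS' j hjS'
    have hkey2 : ∑ i ∈ (S' \ S) \ Sstar, x i ^ 2 = ∑ i ∈ (S' \ S) \ Sstar, g i ^ 2 := by
      apply Finset.sum_congr rfl
      intro i hi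
      rw [hxg i (Finset.mem_sdiff.mp (Finset.mem_sdiff.mp hi).1).2]
    have h3 : ∑ i ∈ Sstar, g i ^ 2
        = ∑ i ∈ Sstar \ (S ∪ S'), g i ^ 2 + ∑ i ∈ Sstar ∩ (S ∪ S'), g i ^ 2 := by
      have hset : Sstar \ (Sstar ∩ (S ∪ S')) = Sstar \ (S ∪ S') := by
        ext a; simp [Finset.mem_sdiff]
      rw [← Finset.sum_sdiff (Finset.inter_subset_left : Sstar ∩ (S ∪ S') ⊆ Sstar), hset]
    have h4 : ∑ i ∈ (S' \ S) \ Sstar, g i ^ 2 + ∑ i ∈ Sstar ∩ (S ∪ S'), g i ^ 2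
        ≤ ∑ i ∈ S ∪ S', g i ^ 2 := by
      rw [← Finset.sum_union (by
        rw [Finset.disjoint_left]
        intro a ha haI
        exact (Finset.mem_sdiff.mp ha).2 (Finset.mem_inter.mp haI).1)]
      apply Finset.sum_le_sum_of_subset_of_nonneg
      · intro a ha
        rcases Finset.mem_union.mp ha with h | h
        · exact Finset.mem_union_right _ (Finset.mem_sdiff.mp (Finset.mem_sdiff.mp h).1).1
        · exact (Finset.mem_inter.mp h).2
      · intros; positivity
    linarith
end
end

section
/- Let f : ℝ^N → ℝ be (2k, β)-smooth along sparse directions, and let θ be a k-sparse point with support S satisfying ‖∇f(θ)_S‖ ≤ ε. Let θ' = T_k(θ − (1/β)∇f(θ)) with support S'. Then f(θ') ≤ f(θ) + (β/2)(2‖θ_{S∖S'}‖² + 2ε²/β² − ‖(1/β)∇f(θ)‖_∞²), provided ‖∇f(θ)_{S∪S'}‖_∞ = ‖∇f(θ)‖_∞. -/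
open scoped BigOperators RealInnerProductSpace

noncomputable section

lemma norm_sq_restrict {N : ℕ} (x : EuclideanSpace ℝ (Fin N)) (S : Finset (Fin N)) :
    ‖restrict x S‖ ^ 2 = ∑ i ∈ S, (x i) ^ 2 := by
  rw [PiLp.norm_sq_eq_of_L2]
  rw [show (∑ i, ‖restrict x S i‖ ^ 2) = ∑ i, (if i ∈ S then (x i)^2 else 0) from
    Finset.sum_congr rfl (fun i _ => by by_cases h : i ∈ S <;> simp [restrict, h, sq_abs])]
  rw [Finset.sum_ite_mem, Finset.univ_inter]

lemma supNorm_sq_le {N : ℕ} (x : EuclideanSpace ℝ (Fin N)) :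
    supNorm x ^ 2 ≤ ‖x‖ ^ 2 := by
  have h : supNorm x ≤ ‖x‖ := by
    apply pi_norm_le_iff_of_nonneg (norm_nonneg x) |>.2
    intro i
    have h1 : (x i)^2 ≤ ‖x‖^2 := by
      rw [PiLp.norm_sq_eq_of_L2]
      refine (Finset.single_le_sum (f := fun i => ‖x i‖^2) (fun i _ => by positivity)
        (Finset.mem_univ i)).trans_eq' ?_
      simp [sq_abs]
    calc ‖(WithLp.equiv 2 (Fin N → ℝ)) x i‖ = Real.sqrt ((x i)^2) := by
          simp [Real.norm_eq_abs, Real.sqrt_sq_eq_abs]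
      _ ≤ Real.sqrt (‖x‖^2) := Real.sqrt_le_sqrt h1
      _ = ‖x‖ := Real.sqrt_sq (norm_nonneg _)
  exact pow_le_pow_left₀ (norm_nonneg _) h 2


set_option maxHeartbeats 1000000 in
/-- Descent bound for an IHT step starting from a nearly-stationary sparse point. -/
theorem stmt_13 {N k : ℕ} (β ε : ℝ) (hβ : 0 < β)
    (f : EuclideanSpace ℝ (Fin N) → ℝ) (hf : Differentiable ℝ f)
    (hsmooth : ∀ θ δ : EuclideanSpace ℝ (Fin N), (supp δ).card ≤ 2 * k →
      f (θ + δ) ≤ f θ + ⟪gradient f θ, δ⟫ + β / 2 * ‖δ‖ ^ 2)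
    (θ θ' : EuclideanSpace ℝ (Fin N)) (hθ : (supp θ).card ≤ k)
    (hε : ‖restrict (gradient f θ) (supp θ)‖ ≤ ε)
    (hT : IsTopK k (θ - β⁻¹ • gradient f θ) θ')
    (hinf : supNorm (restrict (gradient f θ) (supp θ ∪ supp θ')) =
      supNorm (gradient f θ)) :
    f θ' ≤ f θ + β / 2 * (2 * ‖restrict θ (supp θ \ supp θ')‖ ^ 2 +
      2 * ε ^ 2 / β ^ 2 - supNorm (β⁻¹ • gradient f θ) ^ 2) := by
  classical
  set g := gradient f θ with hg
  obtain ⟨S', hS'card, hθ'eq, -⟩ := hT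
  set S := supp θ with hSdef
  set T := supp θ' with hTdef
  have hθ0 : ∀ i, i ∉ S → θ i = 0 := by
    intro i hi
    by_contra h
    exact hi (Finset.mem_filter.2 ⟨Finset.mem_univ i, h⟩)
  have hθ'0 : ∀ i, i ∉ T → θ' i = 0 := by
    intro i hi
    by_contra h
    exact hi (Finset.mem_filter.2 ⟨Finset.mem_univ i, h⟩)
  have hTsub : T ⊆ S' := by
    intro i hi
    have hne : θ' i ≠ 0 := (Finset.mem_filter.1 hi).2
    by_contra h
    exact hne (by rw [hθ'eq]; simp [restrict, h])
  have hθ'x : ∀ i ∈ T, θ' i = θ i - β⁻¹ * g i := by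
    intro i hi
    rw [hθ'eq]
    simp [restrict, hTsub hi, PiLp.sub_apply, PiLp.smul_apply, smul_eq_mul]
  -- sparsity of the step
  have hcard : (supp (θ' - θ)).card ≤ 2 * k := by
    have hsub : supp (θ' - θ) ⊆ S ∪ T := by
      intro i hi
      have hne : (θ' - θ) i ≠ 0 := (Finset.mem_filter.1 hi).2
      by_contra h
      rw [Finset.mem_union, not_or] at h
      exact hne (by
        show θ' i - θ i = 0
        rw [hθ0 i h.1, hθ'0 i h.2, sub_zero])
    calc (supp (θ' - θ)).card ≤ (S ∪ T).card := Finset.card_le_card hsub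
      _ ≤ S.card + T.card := Finset.card_union_le _ _
      _ ≤ k + k := by
          have : T.card ≤ S'.card := Finset.card_le_card hTsub
          omega
      _ = 2 * k := by ring
  have hsm := hsmooth θ (θ' - θ) hcard
  rw [show θ + (θ' - θ) = θ' by abel] at hsm
  refine hsm.trans ?_
  have hη : β * β⁻¹ = 1 := mul_inv_cancel₀ hβ.ne'
  -- rewrite the quadratic as a sum
  have h1 : ⟪g, θ' - θ⟫ = ∑ i, g i * (θ' i - θ i) := by
    simp [PiLp.inner_apply, RCLike.inner_apply, PiLp.sub_apply, mul_comm]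
  have h2 : ‖θ' - θ‖^2 = ∑ i, (θ' i - θ i)^2 := by
    rw [PiLp.norm_sq_eq_of_L2]
    refine Finset.sum_congr rfl fun i _ => by rw [Real.norm_eq_abs, sq_abs]; rfl
  set A : Fin N → ℝ := fun i => (θ' i - (θ i - β⁻¹ * g i))^2 - (β⁻¹ * g i)^2 with hA
  have hsum : ⟪g, θ' - θ⟫ + β/2 * ‖θ' - θ‖^2 = β/2 * ∑ i, A i := by
    rw [h1, h2, Finset.mul_sum, Finset.mul_sum, ← Finset.sum_add_distrib]
    refine Finset.sum_congr rfl fun i _ => ?_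
    simp only [hA]
    linear_combination (-(g i * (θ' i - θ i))) * hη
  -- restrict sum to the union
  have hUA : ∑ i, A i = ∑ i ∈ S ∪ T, A i := by
    refine (Finset.sum_subset (Finset.subset_univ _) ?_).symm
    intro i _ hi
    rw [Finset.mem_union, not_or] at hi
    rw [hA]
    simp only []
    rw [hθ0 i hi.1, hθ'0 i hi.2]
    ring
  have hsplit : ∑ i ∈ S ∪ T, A i = ∑ i ∈ S \ T, A i + ∑ i ∈ T, A i := by
    rw [← Finset.sum_union Finset.sdiff_disjoint, Finset.sdiff_union_self_eq_union]
  have hTsum : ∑ i ∈ T, A i = - ∑ i ∈ T, (β⁻¹ * g i)^2 := by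
    rw [← Finset.sum_neg_distrib]
    refine Finset.sum_congr rfl fun i hi => ?_
    rw [hA]; simp only []
    rw [hθ'x i hi]; ring
  have hSdiffsum : ∑ i ∈ S \ T, A i
      ≤ ∑ i ∈ S \ T, (2 * (θ i)^2 + (β⁻¹ * g i)^2) := by
    refine Finset.sum_le_sum fun i hi => ?_
    have h0 : θ' i = 0 := hθ'0 i (Finset.mem_sdiff.1 hi).2
    rw [hA]; simp only []
    rw [h0]
    nlinarith [sq_nonneg (θ i + β⁻¹ * g i)]
  -- key scalar bounds
  have hb : ∑ i ∈ S \ T, (g i)^2 ≤ ε^2 := by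
    have h3 : ∑ i ∈ S \ T, (g i)^2 ≤ ∑ i ∈ S, (g i)^2 :=
      Finset.sum_le_sum_of_subset_of_nonneg (Finset.sdiff_subset) (fun i _ _ => sq_nonneg _)
    have h4 : ∑ i ∈ S, (g i)^2 = ‖restrict g S‖^2 := (norm_sq_restrict g S).symm
    have h5 : ‖restrict g S‖^2 ≤ ε^2 := pow_le_pow_left₀ (norm_nonneg _) hε 2
    linarith
  have ha : supNorm g ^ 2 ≤ ∑ i ∈ S \ T, (g i)^2 + ∑ i ∈ T, (g i)^2 := by
    have := supNorm_sq_le (restrict g (S ∪ T))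
    rw [norm_sq_restrict] at this
    rw [← hinf]
    calc supNorm (restrict g (S ∪ T)) ^ 2 ≤ ∑ i ∈ S ∪ T, (g i)^2 := this
      _ = ∑ i ∈ S \ T, (g i)^2 + ∑ i ∈ T, (g i)^2 := by
          rw [← Finset.sum_union Finset.sdiff_disjoint, Finset.sdiff_union_self_eq_union]
  have hsupsmul : supNorm (β⁻¹ • g) = β⁻¹ * supNorm g := by
    unfold supNorm
    rw [show (WithLp.equiv 2 (Fin N → ℝ)) (β⁻¹ • g) = β⁻¹ • (WithLp.equiv 2 (Fin N → ℝ)) g from rfl, norm_smul, Real.norm_eq_abs, abs_of_pos (inv_pos.2 hβ)]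
  -- final arithmetic
  have hrest : ‖restrict θ (S \ T)‖^2 = ∑ i ∈ S \ T, (θ i)^2 := norm_sq_restrict θ _
  have hεnn : 0 ≤ ε := le_trans (norm_nonneg _) hε
  have hfinal : ∑ i, A i ≤ 2 * ‖restrict θ (S \ T)‖ ^ 2 +
      2 * ε ^ 2 / β ^ 2 - supNorm (β⁻¹ • g) ^ 2 := by
    rw [hUA, hsplit, hTsum, hrest, hsupsmul, mul_pow]
    have hη2 : (0:ℝ) < β⁻¹^2 := by positivity
    have key : ∑ i ∈ S \ T, (g i)^2 - ∑ i ∈ T, (g i)^2 + supNorm g ^ 2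
        ≤ 2 * ε^2 := by linarith
    have key2 : β⁻¹^2 * (∑ i ∈ S \ T, (g i)^2 - ∑ i ∈ T, (g i)^2 + supNorm g ^ 2)
        ≤ β⁻¹^2 * (2 * ε^2) := by
      exact mul_le_mul_of_nonneg_left key hη2.le
    have hc1 : ∑ i ∈ S \ T, (β⁻¹ * g i)^2 = β⁻¹^2 * ∑ i ∈ S \ T, (g i)^2 := by
      rw [Finset.mul_sum]; exact Finset.sum_congr rfl fun i _ => by ring
    have hc2 : ∑ i ∈ T, (β⁻¹ * g i)^2 = β⁻¹^2 * ∑ i ∈ T, (g i)^2 := by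
      rw [Finset.mul_sum]; exact Finset.sum_congr rfl fun i _ => by ring
    have hc3 : 2 * ε^2 / β^2 = β⁻¹^2 * (2 * ε^2) := by
      field_simp
    have hc4 : ∑ i ∈ S \ T, (2 * (θ i)^2 + (β⁻¹ * g i)^2)
        = 2 * ∑ i ∈ S \ T, (θ i)^2 + ∑ i ∈ S \ T, (β⁻¹ * g i)^2 := by
      rw [Finset.sum_add_distrib, Finset.mul_sum]
    rw [hc3]
    calc ∑ i ∈ S \ T, A i + -∑ i ∈ T, (β⁻¹ * g i)^2
        ≤ 2 * ∑ i ∈ S \ T, (θ i)^2 + ∑ i ∈ S \ T, (β⁻¹ * g i)^2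
            - ∑ i ∈ T, (β⁻¹ * g i)^2 := by
          rw [← hc4]; linarith [hSdiffsum]
      _ ≤ 2 * ∑ i ∈ S \ T, (θ i)^2 + β⁻¹^2 * (2 * ε^2) - β⁻¹^2 * supNorm g ^ 2 := by
          rw [hc1, hc2]
          nlinarith [key2]
      _ = 2 * ∑ i ∈ S \ T, (θ i)^2 + β⁻¹^2 * (2 * ε^2) - (β⁻¹^2 * supNorm g ^ 2) := by ring
  have hβ2 : (0:ℝ) < β / 2 := by linarith
  have := mul_le_mul_of_nonneg_left hfinal hβ2.le
  linarith [hsum, this]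
end
end
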